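/- Let r ≤ s, C ∈ Herm_r^{++}, D ∈ Herm_s^{++}, and Σ = diag(λ_1(D_{11}^{-1}C),…,λ_r(D_{11}^{-1}C)). An invertible s×s matrix Z satisfies Z D Z* = I_s and Z Ω_+(C) Z* = Ω_+(Σ) if and only if Z = [[P D_{11}^{-1/2}, 0],[−QW D_{12}* D_{11}^{-1}, QW]] where Q ∈ U(s−r), W = (D_{22} − D_{12}* D_{11}^{-1} D_{12})^{-1/2}, and P ∈ U(r) satisfies P* Σ P = D_{11}^{-1/2} C D_{11}^{-1/2}. -/

import Mathlib

noncomputable section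

open Matrix Finset
open scoped ComplexOrder

abbrev Mat (p : ℕ) := Matrix (Fin p) (Fin p) ℂ
abbrev Euc (n : ℕ) := EuclideanSpace ℂ (Fin n)

/-- Loewner order: `X ⪯ Y`. -/
def loewner {p : ℕ} (X Y : Mat p) : Prop := (Y - X).PosSemidef

/-- The square root of a positive semidefinite matrix, as `Matrix.PosSemidef.sqrt` was defined
in the older Mathlib (removed since). -/
def psdSqrt {n : Type*} [Fintype n] [DecidableEq n] {A : Matrix n n ℂ} (hA : A.PosSemidef) :
    Matrix n n ℂ :=
  (hA.1.eigenvectorUnitary : Matrix n n ℂ) * diagonal ((↑) ∘ Real.sqrt ∘ hA.1.eigenvalues) *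
    (star hA.1.eigenvectorUnitary : Matrix n n ℂ)

theorem psdSqrt_isHermitian {n : Type*} [Fintype n] [DecidableEq n] {A : Matrix n n ℂ}
    (hA : A.PosSemidef) : (psdSqrt hA).IsHermitian := by
  unfold psdSqrt
  rw [show (star hA.1.eigenvectorUnitary : Matrix n n ℂ)
      = (hA.1.eigenvectorUnitary : Matrix n n ℂ)ᴴ from rfl]
  exact isHermitian_mul_mul_conjTranspose _
    (by simp [IsHermitian, diagonal_conjTranspose, Function.comp_def])

/-- Eigenvalues (unsorted) of `X^{-1/2} Y X^{-1/2}`, i.e. of the pencil `X⁻¹ Y`. -/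
def relEigs {p : ℕ} {X Y : Mat p} (hX : X.PosDef) (hY : Y.IsHermitian) : Fin p → ℝ :=
  Matrix.IsHermitian.eigenvalues (A := (psdSqrt hX.posSemidef)⁻¹ * Y * (psdSqrt hX.posSemidef)⁻¹) (by
    have hS : (psdSqrt hX.posSemidef).IsHermitian := psdSqrt_isHermitian hX.posSemidef
    have hSi : ((psdSqrt hX.posSemidef)⁻¹).IsHermitian := hS.inv
    have h : (psdSqrt hX.posSemidef)⁻¹ * Y * (psdSqrt hX.posSemidef)⁻¹
        = (psdSqrt hX.posSemidef)⁻¹ * Y * ((psdSqrt hX.posSemidef)⁻¹)ᴴ := by rw [hSi.eq]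
    rw [h]
    exact Matrix.isHermitian_mul_mul_conjTranspose _ hY)

/-- Eigenvalues of a Hermitian matrix, sorted in decreasing order. -/
def eigsDesc {p : ℕ} {Z : Mat p} (hZ : Z.IsHermitian) : Fin p → ℝ :=
  fun i => (hZ.eigenvalues ∘ Tuple.sort hZ.eigenvalues) i.rev

/-- Decreasingly sorted eigenvalues of the pencil `X⁻¹ Y`. -/
def relEigsDesc {p : ℕ} {X Y : Mat p} (hX : X.PosDef) (hY : Y.IsHermitian) : Fin p → ℝ :=
  fun i => ((relEigs hX hY) ∘ Tuple.sort (relEigs hX hY)) i.rev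

/-- Zero-padding of an `a × a` matrix to an `N × N` matrix. -/
def padTo (N : ℕ) {a : ℕ} (A : Mat a) : Mat N :=
  Matrix.of fun i j => if h : (i : ℕ) < a ∧ (j : ℕ) < a then A ⟨i, h.1⟩ ⟨j, h.2⟩ else 0

/-- `diag(P, I)` where `P` is `c × c`. -/
def upPad {s : ℕ} (c : ℕ) (P : Mat c) : Mat s :=
  Matrix.of fun i j =>
    if hi : (i : ℕ) < c then (if hj : (j : ℕ) < c then P ⟨i, hi⟩ ⟨j, hj⟩ else 0)
    else if (i : ℕ) = (j : ℕ) then 1 else 0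

/-- `diag(I_c, T)` where `T` is `(s-c) × (s-c)`. -/
def lowPad {s : ℕ} (c : ℕ) (T : Mat (s - c)) : Mat s :=
  Matrix.of fun i j =>
    if hi : (i : ℕ) < c then (if (i : ℕ) = (j : ℕ) then 1 else 0)
    else if hj : (j : ℕ) < c then 0
    else T ⟨(i : ℕ) - c, by have := i.isLt; omega⟩ ⟨(j : ℕ) - c, by have := j.isLt; omega⟩

/-- The natural isometric inclusion `k^a → k^N` (for `a ≤ N`), as a linear map. -/
def incl (a N : ℕ) : Euc a →ₗ[ℂ] Euc N :=
  Matrix.toEuclideanLin (Matrix.of fun (i : Fin N) (j : Fin a) => if (i : ℕ) = (j : ℕ) then (1 : ℂ) else 0)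

/-- The orthogonal complement of the kernel of (the linear map of) a matrix. -/
def kerPerp {n : ℕ} (A : Mat n) : Submodule ℂ (Euc n) :=
  (LinearMap.ker (Matrix.toEuclideanLin A))ᗮ

/-- Matrix representation `(uᵢ* A uⱼ)` of `A` with respect to a tuple of vectors `u`. -/
def rep {n p : ℕ} (A : Mat n) (u : Fin p → Euc n) : Mat p :=
  Matrix.of fun i j => (inner ℂ (u i) (Matrix.toEuclideanLin A (u j)) : ℂ)

/-- `(u, v)` is a set of principal vectors between `U` and `V` with cosines of principal
angles `σ` (decreasing). -/
def IsPrincipalSystem {N p q : ℕ} (U V : Submodule ℂ (Euc N))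
    (u : Fin p → Euc N) (v : Fin q → Euc N) (σ : Fin (min p q) → ℝ) : Prop :=
  Orthonormal ℂ u ∧ Submodule.span ℂ (Set.range u) = U ∧
  Orthonormal ℂ v ∧ Submodule.span ℂ (Set.range v) = V ∧
  Antitone σ ∧ (∀ i, 0 ≤ σ i) ∧
  ∀ (i : Fin p) (j : Fin q), (inner ℂ (u i) (v j) : ℂ) =
    if h : (i : ℕ) = (j : ℕ) ∧ (i : ℕ) < min p q then ((σ ⟨(i : ℕ), h.2⟩ : ℝ) : ℂ) else 0

/-- Geodesic distance on Grassmannians: square root of the sum of squared principal angles. -/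
def dGr {N : ℕ} (U V : Submodule ℂ (Euc N)) : ℝ :=
  sInf {x | ∃ (u : Fin (Module.finrank ℂ U) → Euc N) (v : Fin (Module.finrank ℂ V) → Euc N)
    (σ : Fin (min (Module.finrank ℂ U) (Module.finrank ℂ V)) → ℝ),
    IsPrincipalSystem U V u v σ ∧ x = Real.sqrt (∑ i, Real.arccos (σ i) ^ 2)}

/-- Generalized Hausdorff value of a function on a subset of a product. -/
def hausd {α β : Type*} (δ : α → β → ℝ) (Z : Set (α × β)) : ℝ :=
  max (sSup {x | ∃ a ∈ Prod.fst '' Z, x = sInf {y | ∃ b, (a, b) ∈ Z ∧ y = δ a b}})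
      (sSup {x | ∃ b ∈ Prod.snd '' Z, x = sInf {y | ∃ a, (a, b) ∈ Z ∧ y = δ a b}})

/-- The set of pairs of matrix representations with respect to all principal vector systems. -/
def ZSet {N p q : ℕ} (A B : Mat N) : Set (Mat p × Mat q) :=
  {z | ∃ u v σ, IsPrincipalSystem (kerPerp A) (kerPerp B) u v σ ∧ z = (rep A u, rep B v)}

/-- The geometric distance `GD_{d,δ}` between PSD matrices of possibly different sizes. -/
def GD {n m p q : ℕ} (d : ∀ N, Submodule ℂ (Euc N) → Submodule ℂ (Euc N) → ℝ)
    (δ : Mat p → Mat q → ℝ) (A : Mat n) (B : Mat m) : ℝ :=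
  Real.sqrt (d (max n m) (kerPerp (padTo (max n m) A)) (kerPerp (padTo (max n m) B)) ^ 2 +
    hausd δ (ZSet (padTo (max n m) A) (padTo (max n m) B)) ^ 2)

end

open Matrix
open scoped ComplexOrder

section Helpers
open Matrix
open scoped ComplexOrder

variable {n m : Type*} [Fintype n] [DecidableEq n] [Fintype m] [DecidableEq m]

private lemma mulVec_ne_zero {B : Matrix n n ℂ} (hB : IsUnit B) {x : n → ℂ} (hx : x ≠ 0) :
    B *ᵥ x ≠ 0 := by
  intro h
  apply hx
  have hd := (Matrix.isUnit_iff_isUnit_det B).mp hB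
  have : B⁻¹ *ᵥ (B *ᵥ x) = x := by
    rw [Matrix.mulVec_mulVec, Matrix.nonsing_inv_mul _ hd, Matrix.one_mulVec]
  rw [h, Matrix.mulVec_zero] at this
  exact this.symm

private lemma isUnit_of_matmul_one {M N : Matrix n n ℂ} (h : M * N = 1) : IsUnit M := by
  rw [Matrix.isUnit_iff_isUnit_det]
  exact IsUnit.of_mul_eq_one N.det (by rw [← Matrix.det_mul, h, Matrix.det_one])

private lemma posDef_conj {A B : Matrix n n ℂ} (hA : A.PosDef) (hB : IsUnit B) :
    (B * A * Bᴴ).PosDef := by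
  refine Matrix.PosDef.of_dotProduct_mulVec_pos ?_ fun x hx => ?_
  · have h1 := hA.1
    unfold Matrix.IsHermitian at h1 ⊢
    rw [Matrix.conjTranspose_mul, Matrix.conjTranspose_mul, Matrix.conjTranspose_conjTranspose,
      h1, Matrix.mul_assoc]
  · have hBH : IsUnit Bᴴ := by
      rw [← Matrix.star_eq_conjTranspose]; exact hB.star
    have hy : Bᴴ *ᵥ x ≠ 0 := mulVec_ne_zero hBH hx
    have key : star x ⬝ᵥ ((B * A * Bᴴ) *ᵥ x) = star (Bᴴ *ᵥ x) ⬝ᵥ (A *ᵥ (Bᴴ *ᵥ x)) := by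
      rw [← Matrix.mulVec_mulVec, ← Matrix.mulVec_mulVec, Matrix.dotProduct_mulVec (star x),
        Matrix.star_mulVec, Matrix.conjTranspose_conjTranspose]
    rw [key]
    exact hA.dotProduct_mulVec_pos hy

private lemma conj_cancel_left {G : Matrix n n ℂ} (hG : IsUnit G) (X : Matrix n n ℂ) :
    G⁻¹ * (G * X * Gᴴ) * (G⁻¹)ᴴ = X := by
  have hd := (Matrix.isUnit_iff_isUnit_det G).mp hG
  have hdH : IsUnit Gᴴ.det := by
    rw [Matrix.det_conjTranspose]; exact hd.star
  rw [Matrix.conjTranspose_nonsing_inv]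
  calc G⁻¹ * (G * X * Gᴴ) * Gᴴ⁻¹
      = (G⁻¹ * G) * X * (Gᴴ * Gᴴ⁻¹) := by noncomm_ring
    _ = X := by rw [Matrix.nonsing_inv_mul _ hd, Matrix.mul_nonsing_inv _ hdH, Matrix.one_mul,
          Matrix.mul_one]

private lemma conj_cancel_right {G : Matrix n n ℂ} (hG : IsUnit G) (X : Matrix n n ℂ) :
    G * (G⁻¹ * X * (G⁻¹)ᴴ) * Gᴴ = X := by
  have hd := (Matrix.isUnit_iff_isUnit_det G).mp hG
  have hdH : IsUnit Gᴴ.det := by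
    rw [Matrix.det_conjTranspose]; exact hd.star
  rw [Matrix.conjTranspose_nonsing_inv]
  calc G * (G⁻¹ * X * Gᴴ⁻¹) * Gᴴ
      = (G * G⁻¹) * X * (Gᴴ⁻¹ * Gᴴ) := by noncomm_ring
    _ = X := by rw [Matrix.mul_nonsing_inv _ hd, Matrix.nonsing_inv_mul _ hdH, Matrix.one_mul,
          Matrix.mul_one]

private lemma loewner_conj {p q : ℕ} {X Y : Mat p} (G : Mat p) (h : loewner X Y) :
    loewner (G * X * Gᴴ) (G * Y * Gᴴ) := by
  unfold loewner at h ⊢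
  have := h.mul_mul_conjTranspose_same G
  rwa [Matrix.mul_sub, Matrix.sub_mul] at this

private lemma loewner_conj_iff {p : ℕ} {X Y : Mat p} {G : Mat p} (hG : IsUnit G) :
    loewner (G * X * Gᴴ) (G * Y * Gᴴ) ↔ loewner X Y := by
  constructor
  · intro h
    have h2 := loewner_conj (q := 0) G⁻¹ h
    rwa [conj_cancel_left hG, conj_cancel_left hG] at h2
  · exact loewner_conj (q := 0) G

private lemma posDef_of_psd_isUnit {M : Matrix n n ℂ} (h : M.PosSemidef) (hu : IsUnit M) :
    M.PosDef := by
  refine Matrix.PosDef.of_dotProduct_mulVec_pos h.1 fun x hx => ?_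
  refine lt_of_le_of_ne ((Matrix.posSemidef_iff_dotProduct_mulVec.mp h).2 x) fun heq => hx ?_
  have h0 : M *ᵥ x = 0 := (h.dotProduct_mulVec_zero_iff x).mp heq.symm
  have hd := (Matrix.isUnit_iff_isUnit_det M).mp hu
  have : M⁻¹ *ᵥ (M *ᵥ x) = x := by
    rw [Matrix.mulVec_mulVec, Matrix.nonsing_inv_mul _ hd, Matrix.one_mulVec]
  rw [h0, Matrix.mulVec_zero] at this
  exact this.symm

private lemma psd_trace_zero {M : Matrix n n ℂ} (hM : M.PosSemidef) (h : M.trace = 0) :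
    M = 0 := by
  exact hM.trace_eq_zero_iff.mp h


private lemma eq_zero_of_mulVec {M : Matrix n m ℂ} (h : ∀ x, M *ᵥ x = 0) : M = 0 := by
  ext i j
  have := congrFun (h (Pi.single j 1)) i
  simpa [Matrix.mulVec_single] using this

private lemma posDef_fromBlocks {A : Matrix n n ℂ} {B : Matrix m m ℂ}
    (hA : A.PosDef) (hB : B.PosDef) : (Matrix.fromBlocks A 0 0 B).PosDef := by
  have hinv : Invertible A := hA.isUnit.invertible
  have hpsd : (Matrix.fromBlocks A 0 0 B).PosSemidef := by
    have h0 : (0 : Matrix n m ℂ)ᴴ = (0 : Matrix m n ℂ) := by simp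
    rw [← h0]
    rw [Matrix.PosDef.fromBlocks₁₁ _ _ hA]
    simpa using hB.posSemidef
  refine posDef_of_psd_isUnit hpsd ?_
  rw [Matrix.isUnit_iff_isUnit_det, Matrix.det_fromBlocks_zero₂₁]
  exact ((Matrix.isUnit_iff_isUnit_det A).mp hA.isUnit).mul
    ((Matrix.isUnit_iff_isUnit_det B).mp hB.isUnit)

private lemma permConj_diag (w : n → ℂ) (e : Equiv.Perm n) :
    ∃ R ∈ Matrix.unitaryGroup n ℂ, Rᴴ * Matrix.diagonal w * R = Matrix.diagonal (w ∘ e) := by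
  classical
  set R : Matrix n n ℂ := Matrix.of fun i j => if i = e j then 1 else 0 with hR
  have hRH : ∀ i j, Rᴴ i j = if j = e i then 1 else 0 := by
    intro i j
    simp [hR, Matrix.conjTranspose_apply, apply_ite (star : ℂ → ℂ)]
  have hRR : Rᴴ * R = 1 := by
    ext j k
    simp only [Matrix.mul_apply, hRH]
    simp only [hR, Matrix.of_apply, ite_mul, one_mul, zero_mul]
    rw [Finset.sum_ite_eq' Finset.univ (e j) (fun i => if i = e k then (1:ℂ) else 0)]
    simp [Matrix.one_apply, EmbeddingLike.apply_eq_iff_eq, eq_comm]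
  refine ⟨R, ?_, ?_⟩
  · rw [Matrix.mem_unitaryGroup_iff, Matrix.star_eq_conjTranspose, ← mul_eq_one_comm]
    exact hRR
  · ext j k
    have : (Matrix.diagonal w * R) = Matrix.of fun i k => if i = e k then w i else 0 := by
      ext i k
      simp [Matrix.diagonal_mul, hR, Matrix.of_apply, mul_ite]
    rw [Matrix.mul_assoc, this]
    simp only [Matrix.mul_apply, hRH, Matrix.of_apply, ite_mul, one_mul, zero_mul]
    rw [Finset.sum_ite_eq' Finset.univ (e j) (fun i => if i = e k then w i else 0)]
    simp [Matrix.diagonal_apply, EmbeddingLike.apply_eq_iff_eq, eq_comm]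

private lemma spec_eq {M : Matrix n n ℂ} (hM : M.IsHermitian) :
    (hM.eigenvectorUnitary : Matrix n n ℂ) * diagonal (RCLike.ofReal ∘ hM.eigenvalues) *
      (star hM.eigenvectorUnitary : Matrix n n ℂ) = M :=
  hM.spectral_theorem.symm

private lemma exists_unitary_conj_eq {M : Matrix n n ℂ} (hM : M.IsHermitian) (e : Equiv.Perm n) :
    ∃ P ∈ Matrix.unitaryGroup n ℂ,
      Pᴴ * Matrix.diagonal ((RCLike.ofReal ∘ hM.eigenvalues) ∘ e) * P = M := by
  obtain ⟨R, hRu, hRc⟩ := permConj_diag (RCLike.ofReal ∘ hM.eigenvalues : n → ℂ) e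
  have hRR : R * Rᴴ = 1 := by
    rw [← Matrix.star_eq_conjTranspose]
    exact Matrix.mem_unitaryGroup_iff.mp hRu
  have hdiag : R * Matrix.diagonal ((RCLike.ofReal ∘ hM.eigenvalues : n → ℂ) ∘ e) * Rᴴ
      = Matrix.diagonal (RCLike.ofReal ∘ hM.eigenvalues : n → ℂ) := by
    rw [← hRc]
    calc R * (Rᴴ * Matrix.diagonal (RCLike.ofReal ∘ hM.eigenvalues : n → ℂ) * R) * Rᴴ
        = (R * Rᴴ) * Matrix.diagonal (RCLike.ofReal ∘ hM.eigenvalues : n → ℂ) * (R * Rᴴ) := by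
          noncomm_ring
      _ = _ := by rw [hRR, Matrix.one_mul, Matrix.mul_one]
  refine ⟨Rᴴ * (star (hM.eigenvectorUnitary : Matrix n n ℂ)),
    mul_mem (Unitary.star_mem hRu) (Unitary.star_mem (hM.eigenvectorUnitary).2), ?_⟩
  have hstar : (star (hM.eigenvectorUnitary : Matrix n n ℂ))ᴴ
      = (hM.eigenvectorUnitary : Matrix n n ℂ) := by
    simp [Matrix.star_eq_conjTranspose]
  rw [Matrix.conjTranspose_mul, hstar, Matrix.conjTranspose_conjTranspose]
  calc (hM.eigenvectorUnitary : Matrix n n ℂ) * R *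
        Matrix.diagonal ((RCLike.ofReal ∘ hM.eigenvalues) ∘ e) *
        (Rᴴ * star (hM.eigenvectorUnitary : Matrix n n ℂ))
      = (hM.eigenvectorUnitary : Matrix n n ℂ) *
        (R * Matrix.diagonal ((RCLike.ofReal ∘ hM.eigenvalues) ∘ e) * Rᴴ) *
        star (hM.eigenvectorUnitary : Matrix n n ℂ) := by noncomm_ring
    _ = M := by rw [hdiag]; exact spec_eq hM

private lemma toBlocks₁₁_conj {p q : ℕ} (Z11 : Mat p) (Z21 : Matrix (Fin q) (Fin p) ℂ)
    (Z22 : Mat q) (Y : Matrix (Fin p ⊕ Fin q) (Fin p ⊕ Fin q) ℂ) :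
    Matrix.toBlocks₁₁ (Matrix.fromBlocks Z11 0 Z21 Z22 * Y *
      (Matrix.fromBlocks Z11 0 Z21 Z22)ᴴ) = Z11 * Matrix.toBlocks₁₁ Y * Z11ᴴ := by
  conv_lhs => rw [← Matrix.fromBlocks_toBlocks Y]
  rw [Matrix.fromBlocks_conjTranspose, Matrix.fromBlocks_multiply, Matrix.fromBlocks_multiply,
    Matrix.toBlocks_fromBlocks₁₁]
  simp



private lemma loewner_refl {p : ℕ} (X : Mat p) : loewner X X := by
  unfold loewner; rw [sub_self]; exact Matrix.PosSemidef.zero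

private lemma psdSqrt_posSemidef {A : Matrix n n ℂ} (hA : A.PosSemidef) :
    (psdSqrt hA).PosSemidef := by
  unfold psdSqrt
  rw [show (star hA.1.eigenvectorUnitary : Matrix n n ℂ)
      = (hA.1.eigenvectorUnitary : Matrix n n ℂ)ᴴ from rfl]
  refine Matrix.PosSemidef.mul_mul_conjTranspose_same ?_ _
  refine Matrix.PosSemidef.diagonal fun i => ?_
  simp only [Pi.zero_apply, Function.comp_apply]
  exact Complex.zero_le_real.mpr (Real.sqrt_nonneg _)

private lemma psdSqrt_mul_self {A : Matrix n n ℂ} (hA : A.PosSemidef) :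
    psdSqrt hA * psdSqrt hA = A := by
  unfold psdSqrt
  have hUU : (star hA.1.eigenvectorUnitary : Matrix n n ℂ) *
      (hA.1.eigenvectorUnitary : Matrix n n ℂ) = 1 := Unitary.coe_star_mul_self _
  conv_rhs => rw [← spec_eq hA.1]
  calc _ = (hA.1.eigenvectorUnitary : Matrix n n ℂ) *
        diagonal (((↑) : ℝ → ℂ) ∘ Real.sqrt ∘ hA.1.eigenvalues) *
        ((star hA.1.eigenvectorUnitary : Matrix n n ℂ) * (hA.1.eigenvectorUnitary : Matrix n n ℂ)) *
        diagonal (((↑) : ℝ → ℂ) ∘ Real.sqrt ∘ hA.1.eigenvalues) *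
        (star hA.1.eigenvectorUnitary : Matrix n n ℂ) := by
        simp only [Matrix.mul_assoc]
    _ = _ := by
      rw [hUU, Matrix.mul_one, Matrix.mul_assoc _ (diagonal _) (diagonal _),
        Matrix.diagonal_mul_diagonal]
      congr 3
      funext i
      simp [← Complex.ofReal_mul, Real.mul_self_sqrt (hA.eigenvalues_nonneg i)]

private lemma sqrt_inv_facts {M : Matrix n n ℂ} (hM : M.PosDef) :
    ((psdSqrt hM.posSemidef)⁻¹).IsHermitian ∧ IsUnit ((psdSqrt hM.posSemidef)⁻¹) ∧
    (psdSqrt hM.posSemidef)⁻¹ * M * (psdSqrt hM.posSemidef)⁻¹ = 1 ∧ ((psdSqrt hM.posSemidef)⁻¹).PosDef := by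
  have hs := psdSqrt_posSemidef hM.posSemidef
  have h2 : (psdSqrt hM.posSemidef).det * (psdSqrt hM.posSemidef).det = M.det := by
    rw [← Matrix.det_mul, psdSqrt_mul_self hM.posSemidef]
  have hMd : M.det ≠ 0 := by
    have := hM.det_pos
    intro h; rw [h] at this; exact lt_irrefl 0 this
  have hdet : IsUnit (psdSqrt hM.posSemidef).det := by
    refine isUnit_iff_ne_zero.mpr fun h => hMd ?_
    rw [← h2, h, mul_zero]
  have hspd : (psdSqrt hM.posSemidef).PosDef :=
    posDef_of_psd_isUnit hs ((Matrix.isUnit_iff_isUnit_det _).mpr hdet)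
  have hApd : ((psdSqrt hM.posSemidef)⁻¹).PosDef := hspd.inv
  refine ⟨hApd.1, hApd.isUnit, ?_, hApd⟩
  have hss : (psdSqrt hM.posSemidef) * (psdSqrt hM.posSemidef) = M := psdSqrt_mul_self hM.posSemidef
  calc (psdSqrt hM.posSemidef)⁻¹ * M * (psdSqrt hM.posSemidef)⁻¹
      = (psdSqrt hM.posSemidef)⁻¹ * ((psdSqrt hM.posSemidef) * (psdSqrt hM.posSemidef)) *
        (psdSqrt hM.posSemidef)⁻¹ := by rw [hss]
    _ = ((psdSqrt hM.posSemidef)⁻¹ * (psdSqrt hM.posSemidef)) *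
        ((psdSqrt hM.posSemidef) * (psdSqrt hM.posSemidef)⁻¹) := by simp only [Matrix.mul_assoc]
    _ = 1 := by rw [Matrix.nonsing_inv_mul _ hdet, Matrix.mul_nonsing_inv _ hdet, Matrix.one_mul]


end Helpers


private lemma key {p q : ℕ}
    (C : Mat p) (hC : C.PosDef)
    (D11 : Mat p) (D12 : Matrix (Fin p) (Fin q) ℂ) (D22 : Mat q)
    (hD11h : D11.IsHermitian) (hD11u : IsUnit D11)
    (A : Mat p) (hAh : A.IsHermitian) (hAu : IsUnit A) (hAD : A * D11 * A = 1)
    (W : Mat q) (hWh : W.IsHermitian)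
    (hWS : W * (D22 - D12ᴴ * D11⁻¹ * D12) * W = 1)
    (Sg : Mat p)
    (P : Mat p) (hPu : P ∈ Matrix.unitaryGroup (Fin p) ℂ)
    (Q : Mat q) (hQu : Q ∈ Matrix.unitaryGroup (Fin q) ℂ)
    (hP : Pᴴ * Sg * P = A * C * A) :
    Matrix.fromBlocks (P * A) 0 (-(Q * W) * D12ᴴ * D11⁻¹) (Q * W) *
        Matrix.fromBlocks D11 D12 D12ᴴ D22 *
        (Matrix.fromBlocks (P * A) 0 (-(Q * W) * D12ᴴ * D11⁻¹) (Q * W))ᴴ = 1 ∧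
    {W' | ∃ Y : Matrix (Fin p ⊕ Fin q) (Fin p ⊕ Fin q) ℂ,
        (Y.PosDef ∧ loewner (Matrix.toBlocks₁₁ Y) C) ∧
        W' = Matrix.fromBlocks (P * A) 0 (-(Q * W) * D12ᴴ * D11⁻¹) (Q * W) * Y *
          (Matrix.fromBlocks (P * A) 0 (-(Q * W) * D12ᴴ * D11⁻¹) (Q * W))ᴴ} =
      {Y : Matrix (Fin p ⊕ Fin q) (Fin p ⊕ Fin q) ℂ | Y.PosDef ∧
        loewner (Matrix.toBlocks₁₁ Y) Sg} := by
  set Z := Matrix.fromBlocks (P * A) 0 (-(Q * W) * D12ᴴ * D11⁻¹) (Q * W) with hZdef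
  have hZD : Z * Matrix.fromBlocks D11 D12 D12ᴴ D22 * Zᴴ = 1 := by
    have hPP : P * Pᴴ = 1 := by
      rw [← Matrix.star_eq_conjTranspose]; exact Matrix.mem_unitaryGroup_iff.mp hPu
    have hQQ : Q * Qᴴ = 1 := by
      rw [← Matrix.star_eq_conjTranspose]; exact Matrix.mem_unitaryGroup_iff.mp hQu
    have hD11d := (Matrix.isUnit_iff_isUnit_det D11).mp hD11u
    have hD11inv : D11⁻¹ * D11 = 1 := Matrix.nonsing_inv_mul _ hD11d
    have hD11inv' : D11 * D11⁻¹ = 1 := Matrix.mul_nonsing_inv _ hD11d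
    have hD11invh : (D11⁻¹)ᴴ = D11⁻¹ := by
      rw [Matrix.conjTranspose_nonsing_inv, hD11h.eq]
    have h3x : ∀ {k : Type} (X : Matrix (Fin p) k ℂ), D11 * (D11⁻¹ * X) = X := by
      intro k X; rw [← Matrix.mul_assoc, hD11inv', Matrix.one_mul]
    have h2x : ∀ {k : Type} (X : Matrix (Fin p) k ℂ), D11⁻¹ * (D11 * X) = X := by
      intro k X; rw [← Matrix.mul_assoc, hD11inv, Matrix.one_mul]
    have hzero : -(Q * W) * D12ᴴ * D11⁻¹ * D11 + Q * W * D12ᴴ = 0 := by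
      rw [Matrix.mul_assoc (-(Q * W) * D12ᴴ) D11⁻¹ D11, hD11inv, Matrix.mul_one, Matrix.neg_mul]
      exact neg_add_cancel _
    rw [Matrix.fromBlocks_conjTranspose, Matrix.fromBlocks_multiply,
      Matrix.fromBlocks_multiply, ← Matrix.fromBlocks_one]
    rw [Matrix.fromBlocks_inj]
    refine ⟨?_, ?_, ?_, ?_⟩
    · simp only [Matrix.conjTranspose_mul, Matrix.conjTranspose_zero, hAh.eq, Matrix.zero_mul,
        Matrix.mul_zero, add_zero]
      have : P * A * D11 * (A * Pᴴ) = P * (A * D11 * A) * Pᴴ := by simp only [Matrix.mul_assoc]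
      rw [this, hAD, Matrix.mul_one, hPP]
    · have hZ21H : (-(Q * W) * D12ᴴ * D11⁻¹)ᴴ = -(D11⁻¹ * (D12 * (W * Qᴴ))) := by
        simp only [Matrix.conjTranspose_mul, Matrix.conjTranspose_neg,
          Matrix.conjTranspose_conjTranspose, hD11invh, hWh.eq, Matrix.mul_neg, Matrix.neg_mul,
          Matrix.mul_assoc]
      rw [hZ21H]
      simp only [Matrix.zero_mul, add_zero, Matrix.conjTranspose_mul, hWh.eq, Matrix.mul_neg,
        Matrix.mul_assoc, h3x, neg_add_cancel]
    · rw [hzero]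
      simp
    · rw [hzero, Matrix.zero_mul, zero_add]
      have hs : -(Q * W) * D12ᴴ * D11⁻¹ * D12 + Q * W * D22
          = Q * W * (D22 - D12ᴴ * D11⁻¹ * D12) := by
        rw [Matrix.mul_sub]
        simp only [Matrix.neg_mul, Matrix.mul_assoc]
        abel
      rw [hs, Matrix.conjTranspose_mul, hWh.eq]
      have : Q * W * (D22 - D12ᴴ * D11⁻¹ * D12) * (W * Qᴴ)
          = Q * (W * (D22 - D12ᴴ * D11⁻¹ * D12) * W) * Qᴴ := by simp only [Matrix.mul_assoc]
      rw [this, hWS, Matrix.mul_one, hQQ]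
  refine ⟨hZD, ?_⟩
  -- Z is invertible
  have hZu : IsUnit Z := by
    refine isUnit_of_matmul_one (N := Matrix.fromBlocks D11 D12 D12ᴴ D22 * Zᴴ) ?_
    rw [← Matrix.mul_assoc]; exact hZD
  have hPP : P * Pᴴ = 1 := by
    rw [← Matrix.star_eq_conjTranspose]; exact Matrix.mem_unitaryGroup_iff.mp hPu
  have hPu' : IsUnit P := isUnit_of_matmul_one hPP
  have hGu : IsUnit (P * A) := hPu'.mul hAu
  have hGCG : (P * A) * C * (P * A)ᴴ = Sg := by
    rw [Matrix.conjTranspose_mul, hAh.eq]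
    have h1 : P * A * C * (A * Pᴴ) = P * (A * C * A) * Pᴴ := by simp only [Matrix.mul_assoc]
    rw [h1, ← hP]
    have h2 : P * (Pᴴ * Sg * P) * Pᴴ = (P * Pᴴ) * Sg * (P * Pᴴ) := by
      simp only [Matrix.mul_assoc]
    rw [h2, hPP, Matrix.one_mul, Matrix.mul_one]
  ext W'
  simp only [Set.mem_setOf_eq]
  constructor
  · rintro ⟨Y, ⟨hYpd, hYl⟩, rfl⟩
    refine ⟨posDef_conj hYpd hZu, ?_⟩
    rw [hZdef, toBlocks₁₁_conj, ← hGCG]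
    exact loewner_conj (q := 0) (P * A) hYl
  · rintro ⟨hWpd, hWl⟩
    refine ⟨Z⁻¹ * W' * (Z⁻¹)ᴴ, ⟨?_, ?_⟩, (conj_cancel_right hZu W').symm⟩
    · have hZiu : IsUnit Z⁻¹ := by
        have hd := (Matrix.isUnit_iff_isUnit_det Z).mp hZu
        exact isUnit_of_matmul_one (Matrix.nonsing_inv_mul Z hd)
      exact posDef_conj hWpd hZiu
    · have hW' : W' = Z * (Z⁻¹ * W' * (Z⁻¹)ᴴ) * Zᴴ := (conj_cancel_right hZu W').symm
      rw [hW', hZdef, toBlocks₁₁_conj, ← hGCG] at hWl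
      exact (loewner_conj_iff hGu).mp hWl


private lemma unitary_structure {p q : ℕ} {Sg : Mat p} (hSg : Sg.PosDef)
    {U : Matrix (Fin p ⊕ Fin q) (Fin p ⊕ Fin q) ℂ} (hU : U * Uᴴ = 1)
    (hmap : ∀ t : ℝ, 0 < t →
      loewner (Matrix.toBlocks₁₁
        (U * Matrix.fromBlocks Sg 0 0 (Matrix.diagonal fun _ => (t : ℂ)) * Uᴴ)) Sg) :
    Matrix.toBlocks₁₂ U = 0 ∧ Matrix.toBlocks₂₁ U = 0 ∧
    Matrix.toBlocks₁₁ U * (Matrix.toBlocks₁₁ U)ᴴ = 1 ∧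
    Matrix.toBlocks₂₂ U * (Matrix.toBlocks₂₂ U)ᴴ = 1 ∧
    Matrix.toBlocks₁₁ U * Sg * (Matrix.toBlocks₁₁ U)ᴴ = Sg := by
  set P := Matrix.toBlocks₁₁ U with hPdef
  set B := Matrix.toBlocks₁₂ U with hBdef
  set R := Matrix.toBlocks₂₁ U with hRdef
  set Q := Matrix.toBlocks₂₂ U with hQdef
  have hUeq : U = Matrix.fromBlocks P B R Q := (Matrix.fromBlocks_toBlocks U).symm
  have hblock : ∀ t : ℝ,
      Matrix.toBlocks₁₁ (U * Matrix.fromBlocks Sg 0 0 (Matrix.diagonal fun _ => (t : ℂ)) * Uᴴ)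
        = P * Sg * Pᴴ + (t : ℂ) • (B * Bᴴ) := by
    intro t
    have hDg : (Matrix.diagonal fun _ : Fin q => (t : ℂ)) = (t : ℂ) • 1 :=
      (Matrix.smul_one_eq_diagonal _).symm
    conv_lhs => rw [hUeq]
    rw [Matrix.fromBlocks_conjTranspose, Matrix.fromBlocks_multiply, Matrix.fromBlocks_multiply,
      Matrix.toBlocks_fromBlocks₁₁, hDg]
    simp [mul_smul_comm, smul_mul_assoc]
  -- B = 0
  have hBBpsd : (B * Bᴴ).PosSemidef := Matrix.posSemidef_self_mul_conjTranspose B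
  have hq0 : ∀ x : Fin p → ℂ, star x ⬝ᵥ ((B * Bᴴ) *ᵥ x) = 0 := by
    intro x
    by_contra hb
    set b := star x ⬝ᵥ ((B * Bᴴ) *ᵥ x) with hbdef
    set a := star x ⬝ᵥ ((Sg - P * Sg * Pᴴ) *ᵥ x) with hadef
    have hbpos : 0 < b := lt_of_le_of_ne ((Matrix.posSemidef_iff_dotProduct_mulVec.mp hBBpsd).2 x) (Ne.symm hb)
    have hkey : ∀ t : ℝ, 0 < t → (t : ℂ) * b ≤ a := by
      intro t ht
      have h := (Matrix.posSemidef_iff_dotProduct_mulVec.mp (hmap t ht)).2 x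
      rw [hblock t] at h
      have hrw : Sg - (P * Sg * Pᴴ + (t : ℂ) • (B * Bᴴ))
          = (Sg - P * Sg * Pᴴ) - (t : ℂ) • (B * Bᴴ) := by abel
      rw [hrw, Matrix.sub_mulVec, dotProduct_sub, Matrix.smul_mulVec,
        dotProduct_smul] at h
      rw [sub_nonneg] at h
      simpa [hbdef, hadef, smul_eq_mul] using h
    have hb1 : b ≤ a := by simpa using hkey 1 one_pos
    have hbre : 0 < b.re := (Complex.lt_def.mp hbpos).1
    have hbim : b.im = 0 := ((Complex.lt_def.mp hbpos).2).symm
    have hare : b.re ≤ a.re := (Complex.le_def.mp hb1).1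
    set t := (a.re + 1) / b.re with htdef
    have ht : 0 < t := div_pos (by linarith) hbre
    have h2 := hkey t ht
    have h3 : ((t : ℂ) * b).re ≤ a.re := (Complex.le_def.mp h2).1
    rw [Complex.mul_re, Complex.ofReal_re, Complex.ofReal_im, hbim] at h3
    simp only [mul_zero, zero_mul, sub_zero] at h3
    rw [htdef, div_mul_cancel₀ _ (ne_of_gt hbre)] at h3
    linarith
  have hBB0 : B * Bᴴ = 0 := by
    refine eq_zero_of_mulVec fun x => ?_
    exact (hBBpsd.dotProduct_mulVec_zero_iff x).mp (hq0 x)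
  have hB0 : B = 0 := by
    have : (Bᴴ)ᴴ * Bᴴ = 0 := by rwa [Matrix.conjTranspose_conjTranspose]
    have hBH : Bᴴ = 0 := Matrix.conjTranspose_mul_self_eq_zero.mp this
    simpa using congrArg Matrix.conjTranspose hBH
  -- unitarity of blocks
  rw [hUeq, hB0] at hU
  rw [Matrix.fromBlocks_conjTranspose, Matrix.fromBlocks_multiply, ← Matrix.fromBlocks_one,
    Matrix.fromBlocks_inj] at hU
  obtain ⟨h11, -, h21, h22⟩ := hU
  simp only [Matrix.conjTranspose_zero, Matrix.mul_zero, Matrix.zero_mul, add_zero,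
    zero_add] at h11 h21 h22
  have hPHP : Pᴴ * P = 1 := mul_eq_one_comm.mp h11
  have hR0 : R = 0 := by
    calc R = R * (Pᴴ * P) := by rw [hPHP, Matrix.mul_one]
      _ = (R * Pᴴ) * P := by rw [Matrix.mul_assoc]
      _ = 0 := by rw [h21, Matrix.zero_mul]
  have hQQ : Q * Qᴴ = 1 := by
    rw [hR0] at h22
    simpa using h22
  -- equality P Sg Pᴴ = Sg via trace
  have hl := hmap 1 one_pos
  rw [hblock 1, hB0] at hl
  simp only [Matrix.mul_zero, Matrix.zero_mul, smul_zero, add_zero] at hl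
  have htr : (Sg - P * Sg * Pᴴ).trace = 0 := by
    rw [Matrix.trace_sub, Matrix.trace_mul_cycle P Sg Pᴴ, hPHP, Matrix.one_mul, sub_self]
  have hfin : Sg - P * Sg * Pᴴ = 0 := psd_trace_zero hl htr
  exact ⟨hB0, hR0, h11, hQQ, (sub_eq_zero.mp hfin).symm⟩


/-- Characterization of the congruences `Z` with `Z D Zᴴ = I` mapping `Ω₊(C)` onto
`Ω₊(Σ)`, where `Σ = diag(λ₁(D₁₁⁻¹C),…,λ_r(D₁₁⁻¹C))`. -/
theorem congruence_characterization
    {r q : ℕ} (C : Mat r) (hC : C.PosDef)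
    (D : Matrix (Fin r ⊕ Fin q) (Fin r ⊕ Fin q) ℂ) (hD : D.PosDef)
    (hD11 : (Matrix.toBlocks₁₁ D).PosDef)
    (hS : (Matrix.toBlocks₂₂ D - (Matrix.toBlocks₁₂ D)ᴴ * (Matrix.toBlocks₁₁ D)⁻¹ *
      Matrix.toBlocks₁₂ D).PosDef) :
    ∀ Z : Matrix (Fin r ⊕ Fin q) (Fin r ⊕ Fin q) ℂ,
      (Z * D * Zᴴ = 1 ∧
        {W | ∃ Y : Matrix (Fin r ⊕ Fin q) (Fin r ⊕ Fin q) ℂ,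
            (Y.PosDef ∧ loewner (Matrix.toBlocks₁₁ Y) C) ∧ W = Z * Y * Zᴴ} =
          {Y : Matrix (Fin r ⊕ Fin q) (Fin r ⊕ Fin q) ℂ | Y.PosDef ∧
            loewner (Matrix.toBlocks₁₁ Y)
              (Matrix.diagonal fun k => ((relEigsDesc hD11 hC.isHermitian k : ℝ) : ℂ))}) ↔
      ∃ P ∈ Matrix.unitaryGroup (Fin r) ℂ, ∃ Q ∈ Matrix.unitaryGroup (Fin q) ℂ,
        Pᴴ * (Matrix.diagonal fun k => ((relEigsDesc hD11 hC.isHermitian k : ℝ) : ℂ)) * P =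
          (psdSqrt hD11.posSemidef)⁻¹ * C * (psdSqrt hD11.posSemidef)⁻¹ ∧
        Z = Matrix.fromBlocks (P * (psdSqrt hD11.posSemidef)⁻¹) 0
          (-(Q * (psdSqrt hS.posSemidef)⁻¹) * (Matrix.toBlocks₁₂ D)ᴴ * (Matrix.toBlocks₁₁ D)⁻¹)
          (Q * (psdSqrt hS.posSemidef)⁻¹) := by
  intro Z
  -- block decomposition of D
  have hDh : D.IsHermitian := hD.1
  have hD21 : Matrix.toBlocks₂₁ D = (Matrix.toBlocks₁₂ D)ᴴ := by
    ext i j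
    simp only [Matrix.toBlocks₂₁, Matrix.toBlocks₁₂, Matrix.conjTranspose_apply, Matrix.of_apply]
    exact (hDh.apply _ _).symm
  have hDfull : D = Matrix.fromBlocks (Matrix.toBlocks₁₁ D) (Matrix.toBlocks₁₂ D)
      (Matrix.toBlocks₁₂ D)ᴴ (Matrix.toBlocks₂₂ D) := by
    rw [← hD21]; exact (Matrix.fromBlocks_toBlocks D).symm
  obtain ⟨hAh, hAu, hAM, hApd⟩ := sqrt_inv_facts hD11
  obtain ⟨hWh, hWu, hWM, hWpd⟩ := sqrt_inv_facts hS
  set A := (psdSqrt hD11.posSemidef)⁻¹ with hAdef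
  set Wm := (psdSqrt hS.posSemidef)⁻¹ with hWdef
  set Sg := (Matrix.diagonal fun k => ((relEigsDesc hD11 hC.isHermitian k : ℝ) : ℂ)) with hSgdef
  have hMpd : (A * C * A).PosDef := by
    have h := posDef_conj hC hAu
    rwa [hAh.eq] at h
  have hMh : (A * C * A).IsHermitian := hMpd.1
  have hSgpd : Sg.PosDef := by
    rw [hSgdef]
    refine Matrix.posDef_diagonal_iff.mpr fun k => Complex.zero_lt_real.mpr ?_
    exact hMpd.eigenvalues_pos _
  obtain ⟨P₀, hP₀u, hP₀c⟩ := exists_unitary_conj_eq hMh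
    (Fin.revPerm.trans (Tuple.sort (relEigs hD11 hC.isHermitian)))
  have hP₀Sg : P₀ᴴ * Sg * P₀ = A * C * A := hP₀c
  constructor
  · -- forward direction
    rintro ⟨hZD, hset⟩
    have hk0 := key C hC (Matrix.toBlocks₁₁ D) (Matrix.toBlocks₁₂ D) (Matrix.toBlocks₂₂ D)
      hD11.1 hD11.isUnit A hAh hAu hAM Wm hWh hWM Sg P₀ hP₀u 1
      (one_mem (Matrix.unitaryGroup (Fin q) ℂ)) hP₀Sg
    set Z₀ := Matrix.fromBlocks (P₀ * A) 0
      (-(1 * Wm) * (Matrix.toBlocks₁₂ D)ᴴ * (Matrix.toBlocks₁₁ D)⁻¹) (1 * Wm) with hZ₀def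
    have hZ0D : Z₀ * D * Z₀ᴴ = 1 := by rw [hDfull]; exact hk0.1
    have hset0 := hk0.2
    have hZu : IsUnit Z := by
      refine isUnit_of_matmul_one (N := D * Zᴴ) ?_
      rw [← Matrix.mul_assoc]; exact hZD
    have hZ0u : IsUnit Z₀ := by
      refine isUnit_of_matmul_one (N := D * Z₀ᴴ) ?_
      rw [← Matrix.mul_assoc]; exact hZ0D
    have hZ0d := (Matrix.isUnit_iff_isUnit_det Z₀).mp hZ0u
    set U := Z * Z₀⁻¹ with hUdef
    have hDinv : Z₀⁻¹ * (Z₀⁻¹)ᴴ = D := by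
      have h := conj_cancel_left hZ0u D
      rwa [hZ0D, Matrix.mul_one] at h
    have hUU : U * Uᴴ = 1 := by
      rw [hUdef, Matrix.conjTranspose_mul]
      calc Z * Z₀⁻¹ * ((Z₀⁻¹)ᴴ * Zᴴ) = Z * (Z₀⁻¹ * (Z₀⁻¹)ᴴ) * Zᴴ := by
            simp only [Matrix.mul_assoc]
        _ = 1 := by rw [hDinv, hZD]
    -- U maps Ω₊(Σ) test matrices into Ω₊(Σ)
    have hUmap : ∀ t : ℝ, 0 < t →
        loewner (Matrix.toBlocks₁₁
          (U * Matrix.fromBlocks Sg 0 0 (Matrix.diagonal fun _ => (t : ℂ)) * Uᴴ)) Sg := by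
      intro t ht
      have hYt : (Matrix.fromBlocks Sg 0 0 (Matrix.diagonal fun _ : Fin q => (t : ℂ))).PosDef ∧
          loewner (Matrix.toBlocks₁₁
            (Matrix.fromBlocks Sg 0 0 (Matrix.diagonal fun _ : Fin q => (t : ℂ)))) Sg := by
        constructor
        · exact posDef_fromBlocks hSgpd
            (Matrix.posDef_diagonal_iff.mpr fun _ => Complex.zero_lt_real.mpr ht)
        · rw [Matrix.toBlocks_fromBlocks₁₁]; exact loewner_refl Sg
      have hmem : (Matrix.fromBlocks Sg 0 0 (Matrix.diagonal fun _ : Fin q => (t : ℂ))) ∈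
          {Y : Matrix (Fin r ⊕ Fin q) (Fin r ⊕ Fin q) ℂ | Y.PosDef ∧
            loewner (Matrix.toBlocks₁₁ Y) Sg} := hYt
      rw [← hset0] at hmem
      obtain ⟨Y, hYc, hYeq⟩ := hmem
      have hZ0HiH : Z₀ᴴ * (Z₀⁻¹)ᴴ = 1 := by
        rw [← Matrix.conjTranspose_mul, Matrix.nonsing_inv_mul _ hZ0d,
          Matrix.conjTranspose_one]
      have hUY : U * Matrix.fromBlocks Sg 0 0 (Matrix.diagonal fun _ : Fin q => (t : ℂ)) * Uᴴ
          = Z * Y * Zᴴ := by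
        rw [hYeq, hUdef, Matrix.conjTranspose_mul]
        calc Z * Z₀⁻¹ * (Z₀ * Y * Z₀ᴴ) * ((Z₀⁻¹)ᴴ * Zᴴ)
            = Z * ((Z₀⁻¹ * Z₀) * Y * (Z₀ᴴ * (Z₀⁻¹)ᴴ)) * Zᴴ := by simp only [Matrix.mul_assoc]
          _ = Z * Y * Zᴴ := by
              rw [Matrix.nonsing_inv_mul _ hZ0d, hZ0HiH, Matrix.one_mul, Matrix.mul_one]
      have hin : Z * Y * Zᴴ ∈ {Y : Matrix (Fin r ⊕ Fin q) (Fin r ⊕ Fin q) ℂ | Y.PosDef ∧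
          loewner (Matrix.toBlocks₁₁ Y) Sg} := by
        rw [← hset]; exact ⟨Y, hYc, rfl⟩
      rw [hUY]
      exact hin.2
    obtain ⟨hB0, hR0, hP1u, hQ1u, hP1Sg⟩ := unitary_structure hSgpd hUU hUmap
    have hUblocks : U = Matrix.fromBlocks (Matrix.toBlocks₁₁ U) 0 0 (Matrix.toBlocks₂₂ U) := by
      rw [← hB0, ← hR0]; exact (Matrix.fromBlocks_toBlocks U).symm
    have hZeq : Z = U * Z₀ := by
      rw [hUdef, Matrix.mul_assoc, Matrix.nonsing_inv_mul _ hZ0d, Matrix.mul_one]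
    have hP1HP1 : (Matrix.toBlocks₁₁ U)ᴴ * Matrix.toBlocks₁₁ U = 1 :=
      mul_eq_one_comm.mp hP1u
    have hP1SgH : (Matrix.toBlocks₁₁ U)ᴴ * Sg * Matrix.toBlocks₁₁ U = Sg := by
      calc (Matrix.toBlocks₁₁ U)ᴴ * Sg * Matrix.toBlocks₁₁ U
          = (Matrix.toBlocks₁₁ U)ᴴ * (Matrix.toBlocks₁₁ U * Sg * (Matrix.toBlocks₁₁ U)ᴴ) *
            Matrix.toBlocks₁₁ U := by rw [hP1Sg]
        _ = ((Matrix.toBlocks₁₁ U)ᴴ * Matrix.toBlocks₁₁ U) * Sg *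
            ((Matrix.toBlocks₁₁ U)ᴴ * Matrix.toBlocks₁₁ U) := by simp only [Matrix.mul_assoc]
        _ = Sg := by rw [hP1HP1, Matrix.one_mul, Matrix.mul_one]
    refine ⟨Matrix.toBlocks₁₁ U * P₀, ?_, Matrix.toBlocks₂₂ U, ?_, ?_, ?_⟩
    · refine mul_mem ?_ hP₀u
      rw [Matrix.mem_unitaryGroup_iff, Matrix.star_eq_conjTranspose]
      exact hP1u
    · rw [Matrix.mem_unitaryGroup_iff, Matrix.star_eq_conjTranspose]
      exact hQ1u
    · rw [Matrix.conjTranspose_mul]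
      calc P₀ᴴ * (Matrix.toBlocks₁₁ U)ᴴ * Sg * (Matrix.toBlocks₁₁ U * P₀)
          = P₀ᴴ * ((Matrix.toBlocks₁₁ U)ᴴ * Sg * Matrix.toBlocks₁₁ U) * P₀ := by
            simp only [Matrix.mul_assoc]
        _ = A * C * A := by rw [hP1SgH, hP₀Sg]
    · rw [hZeq, hUblocks, hZ₀def, Matrix.fromBlocks_multiply, Matrix.fromBlocks_inj]
      refine ⟨?_, ?_, ?_, ?_⟩
      · simp [Matrix.mul_assoc]
      · simp
      · simp [Matrix.mul_neg, Matrix.neg_mul, Matrix.mul_assoc]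
      · simp
  · -- backward direction
    rintro ⟨P, hPu, Q, hQu, hPc, rfl⟩
    have hk := key C hC (Matrix.toBlocks₁₁ D) (Matrix.toBlocks₁₂ D) (Matrix.toBlocks₂₂ D)
      hD11.1 hD11.isUnit A hAh hAu hAM Wm hWh hWM Sg P hPu Q hQu hPc
    constructor
    · rw [hDfull]; exact hk.1
    · exact hk.2
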